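/- Let P, Q be orthogonal projections on a Hilbert space H such that S := PQP has closed range, and let T = PQ be such that (P,Q) is the canonical pair, i.e. P = P_{R(T)}, Q = P_{N(T)^⊥}. Then ‖P − Q‖² = ‖P_{R(S)} − S‖. -/

import Mathlib

open ContinuousLinearMap Submodule LinearMap

variable {H : Type*} [NormedAddCommGroup H] [InnerProductSpace ℂ H] [CompleteSpace H]

/-- `P` is an orthogonal projection: `P² = P = P*`. -/
def IsOrthoProj (P : H →L[ℂ] H) : Prop :=
  P ∘L P = P ∧ ContinuousLinearMap.adjoint P = P

/-- The orthogonal projection onto a (complete, i.e. closed) subspace,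
as an operator on `H`. -/
noncomputable def projOn (K : Submodule ℂ H) [CompleteSpace K] : H →L[ℂ] H :=
  K.subtypeL.comp (orthogonalProjection K)

/-- The orthogonal projection onto a closed subspace, as an operator on `H`. -/
noncomputable def projOnc (K : Submodule ℂ H) (hK : IsClosed (K : Set H)) : H →L[ℂ] H :=
  haveI : CompleteSpace K := hK.completeSpace_coe
  K.subtypeL.comp (orthogonalProjection K)

/-! With `a = ‖(1 - Q) P‖`, the C⋆-identity gives `‖P - PQP‖ = ‖((1 - Q) P)⋆ (1 - Q) P‖ = a²`,
and `R(PQP)`, `R(PQ)` have the same closure (their orthogonal complements are `N(PQP) = N(QP)`),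
so `P_{R(S)} = P`; it remains to show `‖P - Q‖ = a`.

Since `(1 - Q) P = (1 - Q)(P - Q)`, always `a ≤ ‖P - Q‖`. Conversely `(P - Q) x` splits into the
orthogonal vectors `P (1 - Q) x` and `(1 - P) Q x`, whence `‖P - Q‖ ≤ max a ‖(1 - P) Q‖`.
For the canonical pair `R(Q) = N(PQ)ᗮ` is the closure of `R(QP)`. For `y = Q w` with `w = P z`,
`‖y‖² = ⟪w, P y⟫ ≤ ‖w‖ ‖P y‖` and `‖y‖² ≥ (1 - a²) ‖w‖²`, so `‖P y‖² ≥ (1 - a²) ‖y‖²`; this closed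
condition passes to all of `R(Q)`, and means exactly `‖(1 - P) y‖ ≤ a ‖y‖` there. -/

section CStarRing

variable {A : Type*} [NormedRing A] [StarRing A] [CStarRing A] {p q : A}

theorem IsStarProjection.norm_sub_mul_mul_self (hp : IsStarProjection p)
    (hq : IsStarProjection q) : ‖p - p * q * p‖ = ‖(1 - q) * p‖ ^ 2 := by
  have h : star ((1 - q) * p) * ((1 - q) * p) = p - p * q * p := by
    rw [star_mul, hp.isSelfAdjoint.star_eq, hq.one_sub.isSelfAdjoint.star_eq, mul_assoc,
      ← mul_assoc (1 - q), hq.one_sub.isIdempotentElem.eq, sub_mul, one_mul, mul_sub,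
      ← mul_assoc, hp.isIdempotentElem.eq]
  rw [← h, CStarRing.norm_star_mul_self, sq]

theorem IsStarProjection.norm_one_sub_mul_le_norm_sub (hq : IsStarProjection q) (p : A) :
    ‖(1 - q) * p‖ ≤ ‖p - q‖ :=
  calc ‖(1 - q) * p‖ = ‖(1 - q) * (p - q)‖ := by rw [mul_sub, hq.one_sub_mul_self, sub_zero]
    _ ≤ ‖1 - q‖ * ‖p - q‖ := norm_mul_le _ _
    _ ≤ ‖p - q‖ := mul_le_of_le_one_left (norm_nonneg _) (hq.one_sub.norm_le _)

end CStarRing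

section InnerProductSpace

variable {𝕜 E : Type*} [RCLike 𝕜] [NormedAddCommGroup E] [InnerProductSpace 𝕜 E] [CompleteSpace E]
  {p q : E →L[𝕜] E}

theorem IsStarProjection.inner_apply_one_sub_apply_eq_zero (hp : IsStarProjection p) (x y : E) :
    inner 𝕜 (p x) ((1 - p) y) = 0 := by
  rw [← ContinuousLinearMap.adjoint_inner_right, ← ContinuousLinearMap.star_eq_adjoint,
    hp.isSelfAdjoint.star_eq, ← mul_apply_eq_comp, hp.mul_one_sub_self, _root_.zero_apply,
    inner_zero_right]

theorem IsStarProjection.norm_sq_add_norm_sq_one_sub (hp : IsStarProjection p) (x : E) :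
    ‖p x‖ ^ 2 + ‖(1 - p) x‖ ^ 2 = ‖x‖ ^ 2 := by
  have h := norm_add_sq_eq_norm_sq_add_norm_sq_of_inner_eq_zero _ _
    (hp.inner_apply_one_sub_apply_eq_zero x x)
  rw [← _root_.add_apply, add_sub_cancel, one_apply_eq_self] at h
  rw [sq, sq, sq, h]

theorem IsStarProjection.norm_apply_le (hp : IsStarProjection p) (x : E) : ‖p x‖ ≤ ‖x‖ := by
  have := hp.norm_sq_add_norm_sq_one_sub x
  nlinarith [norm_nonneg (p x), norm_nonneg x, sq_nonneg ‖(1 - p) x‖]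

theorem IsStarProjection.norm_sub_le_max (hp : IsStarProjection p) (hq : IsStarProjection q) :
    ‖p - q‖ ≤ max ‖(1 - q) * p‖ ‖(1 - p) * q‖ := by
  set m := max ‖(1 - q) * p‖ ‖(1 - p) * q‖
  have hm : 0 ≤ m := le_max_of_le_left (norm_nonneg _)
  refine opNorm_le_bound _ hm fun x => ?_
  have hdecomp : (p - q) x = p ((1 - q) x) - (1 - p) (q x) := by
    simp only [_root_.sub_apply, one_apply_eq_self, map_sub]
    abel
  have hu : ‖p ((1 - q) x)‖ ≤ m * ‖(1 - q) x‖ :=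
    calc ‖p ((1 - q) x)‖ = ‖(p * (1 - q)) ((1 - q) x)‖ := by
          rw [mul_apply_eq_comp, ← mul_apply_eq_comp (1 - q), hq.one_sub.isIdempotentElem.eq]
      _ ≤ ‖p * (1 - q)‖ * ‖(1 - q) x‖ := le_opNorm _ _
      _ = ‖(1 - q) * p‖ * ‖(1 - q) x‖ := by
          rw [← norm_star, star_mul, hp.isSelfAdjoint.star_eq, hq.one_sub.isSelfAdjoint.star_eq]
      _ ≤ m * ‖(1 - q) x‖ := by gcongr; exact le_max_left _ _
  have hv : ‖(1 - p) (q x)‖ ≤ m * ‖q x‖ :=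
    calc ‖(1 - p) (q x)‖ = ‖((1 - p) * q) (q x)‖ := by
          rw [mul_apply_eq_comp, ← mul_apply_eq_comp q, hq.isIdempotentElem.eq]
      _ ≤ ‖(1 - p) * q‖ * ‖q x‖ := le_opNorm _ _
      _ ≤ m * ‖q x‖ := by gcongr; exact le_max_right _ _
  have horth : ‖(p - q) x‖ ^ 2 = ‖p ((1 - q) x)‖ ^ 2 + ‖(1 - p) (q x)‖ ^ 2 := by
    rw [hdecomp, @norm_sub_sq 𝕜, hp.inner_apply_one_sub_apply_eq_zero, map_zero, mul_zero,
      sub_zero]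
  refine le_of_sq_le_sq ?_ (by positivity)
  calc ‖(p - q) x‖ ^ 2 = ‖p ((1 - q) x)‖ ^ 2 + ‖(1 - p) (q x)‖ ^ 2 := horth
    _ ≤ (m * ‖(1 - q) x‖) ^ 2 + (m * ‖q x‖) ^ 2 := by gcongr
    _ = (m * ‖x‖) ^ 2 := by
        rw [mul_pow, mul_pow, mul_pow, ← hq.norm_sq_add_norm_sq_one_sub x]
        ring

theorem IsStarProjection.one_sub_sq_norm_mul_sq_norm_le (hp : IsStarProjection p)
    (hq : IsStarProjection q) (z : E) :
    (1 - ‖(1 - q) * p‖ ^ 2) * ‖q (p z)‖ ^ 2 ≤ ‖p (q (p z))‖ ^ 2 := by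
  set a := ‖(1 - q) * p‖
  set w := p z
  set y := q w
  have hw : p w = w := by rw [← mul_apply_eq_comp, hp.isIdempotentElem.eq]
  have hlower : (1 - a ^ 2) * ‖w‖ ^ 2 ≤ ‖y‖ ^ 2 := by
    have h : ‖(1 - q) w‖ ≤ a * ‖w‖ :=
      calc ‖(1 - q) w‖ = ‖((1 - q) * p) w‖ := by rw [mul_apply_eq_comp, hw]
        _ ≤ a * ‖w‖ := le_opNorm _ _
    have := hq.norm_sq_add_norm_sq_one_sub w
    nlinarith [pow_le_pow_left₀ (norm_nonneg _) h 2]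
  have hupper : ‖y‖ ^ 2 ≤ ‖w‖ * ‖p y‖ := by
    have h : inner 𝕜 y y = inner 𝕜 w (p y) :=
      calc inner 𝕜 (q w) y = inner 𝕜 w (q y) := hq.isSelfAdjoint.isSymmetric w y
        _ = inner 𝕜 (p w) y := by rw [← mul_apply_eq_comp q q, hq.isIdempotentElem.eq, hw]
        _ = inner 𝕜 w (p y) := hp.isSelfAdjoint.isSymmetric w y
    calc ‖y‖ ^ 2 = RCLike.re (inner 𝕜 y y) := (inner_self_eq_norm_sq y).symm
      _ ≤ ‖w‖ * ‖p y‖ := h ▸ re_inner_le_norm w (p y)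
  rcases le_or_gt (1 - a ^ 2) 0 with hc | hc
  · exact (mul_nonpos_of_nonpos_of_nonneg hc (sq_nonneg _)).trans (sq_nonneg _)
  rcases (norm_nonneg y).eq_or_lt with hy | hy
  · simp [← hy]
  refine le_of_mul_le_mul_right ?_ (pow_pos hy 2)
  calc (1 - a ^ 2) * ‖y‖ ^ 2 * ‖y‖ ^ 2 = (1 - a ^ 2) * (‖y‖ ^ 2) ^ 2 := by ring
    _ ≤ (1 - a ^ 2) * (‖w‖ * ‖p y‖) ^ 2 := by gcongr
    _ = (1 - a ^ 2) * ‖w‖ ^ 2 * ‖p y‖ ^ 2 := by ring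
    _ ≤ ‖y‖ ^ 2 * ‖p y‖ ^ 2 := by gcongr
    _ = ‖p y‖ ^ 2 * ‖y‖ ^ 2 := mul_comm _ _

theorem IsStarProjection.norm_one_sub_mul_le_of_range_le (hp : IsStarProjection p)
    (hq : IsStarProjection q)
    (h : LinearMap.range (q : E →ₗ[𝕜] E) ≤
      (LinearMap.range ((q * p : E →L[𝕜] E) : E →ₗ[𝕜] E)).topologicalClosure) :
    ‖(1 - p) * q‖ ≤ ‖(1 - q) * p‖ := by
  set a := ‖(1 - q) * p‖
  have hbound : ∀ y ∈ LinearMap.range (q : E →ₗ[𝕜] E), (1 - a ^ 2) * ‖y‖ ^ 2 ≤ ‖p y‖ ^ 2 := by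
    have hclosed : IsClosed {y : E | (1 - a ^ 2) * ‖y‖ ^ 2 ≤ ‖p y‖ ^ 2} :=
      isClosed_le (continuous_const.mul (continuous_norm.pow 2)) (p.continuous.norm.pow 2)
    refine fun y hy => closure_minimal ?_ hclosed (h hy)
    rintro _ ⟨z, rfl⟩
    exact hp.one_sub_sq_norm_mul_sq_norm_le hq z
  refine opNorm_le_bound _ (norm_nonneg _) fun x => ?_
  have h1 := hbound (q x) ⟨x, rfl⟩
  have h2 := hp.norm_sq_add_norm_sq_one_sub (q x)
  rw [mul_apply_eq_comp]
  refine le_of_sq_le_sq ?_ (by positivity)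
  calc ‖(1 - p) (q x)‖ ^ 2 ≤ a ^ 2 * ‖q x‖ ^ 2 := by linarith
    _ ≤ (a * ‖x‖) ^ 2 := by rw [mul_pow]; gcongr; exact hq.norm_apply_le x

theorem IsStarProjection.adjoint_mul (hp : IsStarProjection p) (hq : IsStarProjection q) :
    adjoint (p * q) = q * p := by
  rw [← ContinuousLinearMap.star_eq_adjoint, star_mul, hp.isSelfAdjoint.star_eq,
    hq.isSelfAdjoint.star_eq]

theorem IsStarProjection.closure_range_mul_mul_self (hp : IsStarProjection p)
    (hq : IsStarProjection q) :
    (LinearMap.range ((p * q * p : E →L[𝕜] E) : E →ₗ[𝕜] E)).topologicalClosure =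
      (LinearMap.range ((p * q : E →L[𝕜] E) : E →ₗ[𝕜] E)).topologicalClosure := by
  have hpqp : adjoint (p * q * p) = adjoint (q * p) ∘L (q * p) := by
    rw [hq.adjoint_mul hp, ← ContinuousLinearMap.mul_def, ← mul_assoc, mul_assoc p q q,
      hq.isIdempotentElem.eq, ← ContinuousLinearMap.star_eq_adjoint, star_mul, star_mul,
      hp.isSelfAdjoint.star_eq, hq.isSelfAdjoint.star_eq, mul_assoc]
  rw [← orthogonal_orthogonal_eq_closure, ← orthogonal_orthogonal_eq_closure,
    ContinuousLinearMap.orthogonal_range, ContinuousLinearMap.orthogonal_range, hpqp,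
    ContinuousLinearMap.ker_adjoint_comp_self, hp.adjoint_mul hq]

theorem IsStarProjection.orthogonal_ker_mul (hp : IsStarProjection p) (hq : IsStarProjection q) :
    (LinearMap.ker ((p * q : E →L[𝕜] E) : E →ₗ[𝕜] E))ᗮ =
      (LinearMap.range ((q * p : E →L[𝕜] E) : E →ₗ[𝕜] E)).topologicalClosure := by
  rw [ContinuousLinearMap.orthogonal_ker, hp.adjoint_mul hq]

end InnerProductSpace

theorem IsOrthoProj.isStarProjection {P : H →L[ℂ] H} (hP : IsOrthoProj P) : IsStarProjection P :=
  ⟨hP.1, hP.2⟩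

theorem stmt16_general (P Q T S : H →L[ℂ] H) (hP : IsOrthoProj P) (hQ : IsOrthoProj Q)
    (hT : T = P ∘L Q) (hS : S = P ∘L Q ∘L P)
    (hPc : P = projOn (LinearMap.range (T : H →ₗ[ℂ] H)).topologicalClosure)
    (hQc : Q = projOn (LinearMap.ker (T : H →ₗ[ℂ] H))ᗮ) :
    ‖P - Q‖ ^ 2 = ‖projOn (LinearMap.range (S : H →ₗ[ℂ] H)).topologicalClosure - S‖ := by
  have hp := hP.isStarProjection
  have hq := hQ.isStarProjection
  replace hT : T = P * Q := hT
  replace hS : S = P * Q * P := hS.trans (mul_assoc P Q P).symm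
  have hprojS : projOn (LinearMap.range (S : H →ₗ[ℂ] H)).topologicalClosure = P := by
    rw [hPc]
    congr 1
    rw [hS, hT, hp.closure_range_mul_mul_self hq]
  have hQrange : LinearMap.range (Q : H →ₗ[ℂ] H) ≤
      (LinearMap.range ((Q * P : H →L[ℂ] H) : H →ₗ[ℂ] H)).topologicalClosure := by
    rw [← hp.orthogonal_ker_mul hq, ← hT, hQc]
    exact (range_starProjection _).le
  have hnorm : ‖P - Q‖ = ‖(1 - Q) * P‖ :=
    le_antisymm ((hp.norm_sub_le_max hq).trans
        (max_le le_rfl (hp.norm_one_sub_mul_le_of_range_le hq hQrange)))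
      (hq.norm_one_sub_mul_le_norm_sub P)
  rw [hprojS, hS, hp.norm_sub_mul_mul_self hq, hnorm]

theorem stmt16 (P Q T S : H →L[ℂ] H) (hP : IsOrthoProj P) (hQ : IsOrthoProj Q)
    (hT : T = P ∘L Q) (hS : S = P ∘L Q ∘L P)
    (hScl : IsClosed ((LinearMap.range (S : H →ₗ[ℂ] H) : Submodule ℂ H) : Set H))
    (hPc : P = projOn (LinearMap.range (T : H →ₗ[ℂ] H)).topologicalClosure)
    (hQc : Q = projOn (LinearMap.ker (T : H →ₗ[ℂ] H))ᗮ) :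
    ‖P - Q‖ ^ 2 = ‖projOn (LinearMap.range (S : H →ₗ[ℂ] H)).topologicalClosure - S‖ :=
  stmt16_general P Q T S hP hQ hT hS hPc hQc
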